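/- arXiv:1208.1133 — 2 statements merged into one kernel-verified Lean document; each statement's English description precedes it below -/
import Mathlib

section
/- Let F be a field and D a central division algebra over F containing a maximal subfield E with E/F Galois. Then E is a splitting field of D, i.e., D ⊗_F E is isomorphic to a matrix algebra over E. -/
open scoped TensorProduct

universe u

section Key

variable {F D E : Type u} [Field F]
    [DivisionRing D] [Algebra F D] [Algebra.IsCentral F D]
    [Field E] [Algebra F E] (ι : E →ₐ[F] D)

/-- Core linear-independence lemma: if `b i` are `F`-linearly independent in `E` and
`∑ i ∈ s, c i * x * ι (b i) = 0` for all `x`, then all `c i = 0`. -/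
theorem keyA {κ : Type u} [DecidableEq κ] (b : κ → E) (hb : LinearIndependent F b) :
    ∀ (s : Finset κ) (c : κ → D), (∀ x : D, ∑ i ∈ s, c i * x * ι (b i) = 0) →
      ∀ i ∈ s, c i = 0 := by
  intro s
  induction s using Finset.strongInduction with
  | _ s ih =>
    intro c h i hi
    by_contra hci
    -- normalize so that the `i`-th coefficient is 1
    set c' : κ → D := fun k => c k * (c i)⁻¹ with hc'
    have hrel : ∀ x : D, ∑ k ∈ s, c' k * x * ι (b k) = 0 := by
      intro x
      have := h ((c i)⁻¹ * x)
      simpa [hc', mul_assoc] using this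
    have hc'i : c' i = 1 := by simp [hc', mul_inv_cancel₀ hci]
    -- every `c' k` for `k ∈ s` is central
    have hcomm : ∀ k ∈ s, ∀ y : D, y * c' k = c' k * y := by
      intro k hk y
      rcases eq_or_ne k i with rfl | hki
      · simp [hc'i]
      · have hrel2 : ∀ x : D,
            ∑ m ∈ s.erase i, (y * c' m - c' m * y) * x * ι (b m) = 0 := by
          intro x
          have h0 : (y * c' i - c' i * y) * x * ι (b i) = 0 := by
            rw [hc'i]; simp
          have e1 : ∑ m ∈ s, (y * c' m - c' m * y) * x * ι (b m)
              = y * (∑ m ∈ s, c' m * x * ι (b m))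
                - ∑ m ∈ s, c' m * (y * x) * ι (b m) := by
            rw [Finset.mul_sum, ← Finset.sum_sub_distrib]
            refine Finset.sum_congr rfl fun m _ => ?_
            noncomm_ring
          have hfull : ∑ m ∈ s, (y * c' m - c' m * y) * x * ι (b m) = 0 := by
            rw [e1, hrel, hrel (y * x)]; simp
          rw [Finset.sum_erase (f := fun m => (y * c' m - c' m * y) * x * ι (b m)) s h0]
          exact hfull
        have h0 := ih (s.erase i) (Finset.erase_ssubset hi)
          (fun m => y * c' m - c' m * y) hrel2 k (Finset.mem_erase.2 ⟨hki, hk⟩)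
        exact (sub_eq_zero.mp h0)
    -- hence each `c' k` is in the image of `F`
    have hcentral : ∀ k ∈ s, ∃ f : F, algebraMap F D f = c' k := by
      intro k hk
      have hmem : c' k ∈ Subalgebra.center F D := by
        rw [Subalgebra.mem_center_iff]
        intro y; exact hcomm k hk y
      have := Algebra.IsCentral.out (K := F) (D := D) hmem
      rwa [Algebra.mem_bot] at this
    classical
    choose! lam hlam using hcentral
    -- evaluate the relation at `x = 1`
    have h1 : ι (∑ k ∈ s, lam k • b k) = 0 := by
      rw [map_sum]
      rw [← hrel 1]
      refine Finset.sum_congr rfl fun k hk => ?_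
      rw [← hlam k hk]
      rw [map_smul]
      rw [Algebra.smul_def, mul_one]
    have h2 : ∑ k ∈ s, lam k • b k = 0 := by
      have : Function.Injective ι := ι.toRingHom.injective
      simpa using this (by simpa using h1)
    have h3 : lam i = 0 := linearIndependent_iff'.mp hb s lam h2 i hi
    have h4 : algebraMap F D (lam i) = 1 := by rw [hlam i hi, hc'i]
    rw [h3, map_zero] at h4
    exact zero_ne_one h4

end Key

/-- A Galois maximal subfield `E` of a central division algebra `D` over `F`
is a splitting field of `D`, i.e. `D ⊗_F E` is a matrix algebra over `E`. -/
theorem maximal_subfield_splits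
    (F : Type u) [Field F]
    (D : Type u) [DivisionRing D] [Algebra F D] [Algebra.IsCentral F D] [FiniteDimensional F D]
    (E : Type u) [Field E] [Algebra F E] [IsGalois F E] [FiniteDimensional F E]
    (ι : E →ₐ[F] D)
    (hmax : Module.finrank F E ^ 2 = Module.finrank F D) :
    ∃ n : ℕ, 0 < n ∧ Nonempty ((E ⊗[F] D) ≃ₐ[E] Matrix (Fin n) (Fin n) E) := by
  classical
  -- `D` as an `E`-module via right multiplication through `ι`
  letI : Module E D := Module.compHom D
    (RingHom.toOpposite ι.toRingHom (fun x y => by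
      unfold Commute SemiconjBy
      rw [← map_mul, ← map_mul, mul_comm]))
  have smul_def : ∀ (e : E) (d : D), e • d = d * ι e := fun _ _ => rfl
  letI : IsScalarTower F E D := ⟨fun f e d => by
    rw [smul_def, smul_def, map_smul, mul_smul_comm]⟩
  letI : SMulCommClass E E D := ⟨fun a b d => by
    rw [smul_def, smul_def, smul_def, smul_def, mul_assoc, mul_assoc,
      ← map_mul, ← map_mul, mul_comm a b]⟩
  letI : IsScalarTower E E D := ⟨fun a b d => by
    have hcomm : ι a * ι b = ι b * ι a := by rw [← map_mul, ← map_mul, mul_comm]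
    rw [smul_eq_mul, smul_def, smul_def, smul_def, map_mul, hcomm, mul_assoc]⟩
  letI : FiniteDimensional E D := Module.Finite.right F E D
  letI : SMulCommClass E F D := ⟨fun e f d => by
    rw [smul_def, smul_def]
    exact smul_mul_assoc f d (ι e)⟩
  letI : IsScalarTower F E (Module.End E D) :=
    ⟨fun f e x => LinearMap.ext fun d => smul_assoc f e (x d)⟩
  have hcommE : ∀ a b : E, ι a * ι b = ι b * ι a := fun a b => by
    rw [← map_mul, ← map_mul, mul_comm]
  -- the bilinear map `(e, d) ↦ (x ↦ d * x * ι e)`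
  let bil : E →ₗ[E] D →ₗ[F] Module.End E D :=
  { toFun := fun e =>
    { toFun := fun d =>
      { toFun := fun x => d * x * ι e
        map_add' := fun x y => show d * (x + y) * ι e = d * x * ι e + d * y * ι e by
          rw [mul_add, add_mul]
        map_smul' := fun e' x => show d * (e' • x) * ι e = e' • (d * x * ι e) by
          rw [smul_def, smul_def]
          simp only [mul_assoc, hcommE e' e] }
      map_add' := fun a b => LinearMap.ext fun x => by
        show (a + b) * x * ι e = a * x * ι e + b * x * ι e
        rw [add_mul, add_mul]
      map_smul' := fun f d => LinearMap.ext fun x => by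
        show (f • d) * x * ι e = f • (d * x * ι e)
        rw [smul_mul_assoc, smul_mul_assoc] }
    map_add' := fun a b => LinearMap.ext fun d => LinearMap.ext fun x => by
      show d * x * ι (a + b) = d * x * ι a + d * x * ι b
      rw [map_add, mul_add]
    map_smul' := fun e' e => LinearMap.ext fun d => LinearMap.ext fun x => by
      show d * x * ι (e' • e) = (d * x * ι e) * ι e'
      rw [smul_eq_mul, map_mul, hcommE e' e]
      simp only [mul_assoc] }
  let L : E ⊗[F] D →ₗ[E] Module.End E D := TensorProduct.AlgebraTensorModule.lift bil
  have hL : ∀ (e : E) (d : D) (x : D), L (e ⊗ₜ d) x = d * x * ι e := fun e d x => rfl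
  let φ : E ⊗[F] D →ₐ[E] Module.End E D :=
    Algebra.TensorProduct.algHomOfLinearMapTensorProduct L
      (fun a₁ a₂ b₁ b₂ => LinearMap.ext fun x => by
        simp only [hL, Module.End.mul_apply]
        rw [map_mul, hcommE a₁ a₂]
        simp only [mul_assoc])
      (LinearMap.ext fun x => by simp only [hL]; rw [map_one, one_mul, mul_one]; rfl)
  have hφ : ∀ (e : E) (d : D) (x : D), φ (e ⊗ₜ d) x = d * x * ι e := fun e d x => rfl
  -- representation of elements of `E ⊗[F] D` in terms of a basis of `E`
  set bE := Module.Basis.ofVectorSpace F E with hbE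
  set κ := Module.Basis.ofVectorSpaceIndex F E with hκ
  let Ψ : (κ →₀ D) →ₗ[F] E ⊗[F] D :=
    Finsupp.lsum F (fun i => (TensorProduct.mk F E D) (bE i))
  have hΨsingle : ∀ (i : κ) (d : D), Ψ (Finsupp.single i d) = bE i ⊗ₜ d := fun i d => by
    simp [Ψ]
  have hsurjΨ : ∀ t : E ⊗[F] D, ∃ c : κ →₀ D, Ψ c = t := by
    intro t
    induction t with
    | zero => exact ⟨0, map_zero Ψ⟩
    | tmul e d =>
      refine ⟨(bE.repr e).sum fun i r => Finsupp.single i (r • d), ?_⟩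
      rw [map_finsuppSum]
      have step : ∀ i ∈ (bE.repr e).support,
          Ψ (Finsupp.single i ((bE.repr e) i • d)) = ((bE.repr e) i • bE i) ⊗ₜ[F] d :=
        fun i _ => by rw [hΨsingle, TensorProduct.tmul_smul, TensorProduct.smul_tmul']
      show ∑ i ∈ (bE.repr e).support, Ψ (Finsupp.single i ((bE.repr e) i • d)) = e ⊗ₜ[F] d
      rw [Finset.sum_congr rfl step, ← TensorProduct.sum_tmul]
      congr 1
      have := bE.linearCombination_repr e
      rwa [Finsupp.linearCombination_apply, Finsupp.sum] at this
    | add x y hx hy =>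
      obtain ⟨c1, h1⟩ := hx
      obtain ⟨c2, h2⟩ := hy
      exact ⟨c1 + c2, by rw [map_add, h1, h2]⟩
  -- injectivity of φ
  have hinj : Function.Injective φ := by
    rw [injective_iff_map_eq_zero]
    intro t ht
    obtain ⟨c, rfl⟩ := hsurjΨ t
    have hx : ∀ x : D, ∑ i ∈ c.support, c i * x * ι (bE i) = 0 := by
      intro x
      have h1 : φ (Ψ c) = c.sum fun i d => φ (bE i ⊗ₜ d) := by
        rw [Finsupp.lsum_apply, map_finsuppSum]
        rfl
      have h2 := congrArg (fun (ψ : Module.End E D) => ψ x) (h1.symm.trans ht)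
      simpa only [Finsupp.sum, LinearMap.coe_sum, Finset.sum_apply,
        LinearMap.zero_apply, hφ] using h2
    have hall := keyA ι (fun i : κ => bE i) bE.linearIndependent c.support c hx
    have : c = 0 := Finsupp.ext fun i => by
      by_cases hmem : i ∈ c.support
      · exact hall i hmem
      · exact Finsupp.notMem_support_iff.mp hmem
    rw [this, map_zero]
  -- dimension count
  have hn : Module.finrank F E * Module.finrank E D = Module.finrank F D :=
    Module.finrank_mul_finrank F E D
  have hpos : 0 < Module.finrank F E := Module.finrank_pos
  have hED : Module.finrank E D = Module.finrank F E :=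
    Nat.eq_of_mul_eq_mul_left hpos (by rw [hn, ← hmax, sq])
  have hdim : Module.finrank E (E ⊗[F] D) = Module.finrank E (Module.End E D) := by
    rw [Module.finrank_baseChange]
    have h2 : Module.finrank E (Module.End E D)
        = Module.finrank E D * Module.finrank E D := Module.finrank_linearMap E E D D
    rw [h2, hED, ← sq, hmax]
  have hsurjφ : Function.Surjective φ :=
    (LinearMap.injective_iff_surjective_of_finrank_eq_finrank hdim).mp hinj
  let eqv : (E ⊗[F] D) ≃ₐ[E] Module.End E D := AlgEquiv.ofBijective φ ⟨hinj, hsurjφ⟩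
  refine ⟨Module.finrank E D, by rw [hED]; exact hpos, ⟨eqv.trans (algEquivMatrix (Module.finBasis E D))⟩⟩
end

section
/- Let G be a finite group, N ⊴ G, H ≤ G, and L an H-Galois algebra over a field F. Then the N-invariants of the induced algebra satisfy Ind_H^G(L)^N ≅ Ind_{H/(N∩H)}^{G/N}(L^{N∩H}) as G/N-Galois algebras. -/
universe u

/-- The induced `G`-Galois algebra `Ind_H^G(A)` of an `H`-algebra `A` over `L` (with `H`
acting via `ρ`): the subalgebra of `H`-equivariant functions `G → A`, on which `G` acts by
right translation. -/
def IndAlg (L : Type u) [CommRing L] (G : Type u) [Group G] (H : Subgroup G)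
    (A : Type u) [Ring A] [Algebra L A] (ρ : H →* (A ≃ₐ[L] A)) :
    Subalgebra L (G → A) where
  carrier := {f | ∀ (h : H) (g : G), f (↑h * g) = ρ h (f g)}
  mul_mem' := by
    intro a b ha hb h g
    simp only [Pi.mul_apply, ha h g, hb h g, map_mul]
  add_mem' := by
    intro a b ha hb h g
    simp only [Pi.add_apply, ha h g, hb h g, map_add]
  one_mem' := by
    intro h g
    simp
  zero_mem' := by
    intro h g
    simp
  algebraMap_mem' := by
    intro r h g
    simp [Pi.algebraMap_apply]

/-- The subalgebra of functions `G → A` invariant under right translation by the normal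
subgroup `N`; intersecting with `IndAlg` gives the `N`-invariants `Ind_H^G(A)^N`. -/
def RightInvAlg (L : Type u) [CommRing L] (G : Type u) [Group G] (N : Subgroup G)
    (A : Type u) [Ring A] [Algebra L A] : Subalgebra L (G → A) where
  carrier := {f | ∀ ν ∈ N, ∀ g : G, f (g * ν) = f g}
  mul_mem' := by
    intro a b ha hb ν hν g
    simp only [Pi.mul_apply, ha ν hν g, hb ν hν g]
  add_mem' := by
    intro a b ha hb ν hν g
    simp only [Pi.add_apply, ha ν hν g, hb ν hν g]
  one_mem' := by intro ν hν g; simp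
  zero_mem' := by intro ν hν g; simp
  algebraMap_mem' := by intro r ν hν g; simp [Pi.algebraMap_apply]

/-- The subalgebra `L^{N ∩ H}` of elements of `L` fixed by the action (via `ρ`) of the
elements of `H` lying in `N`. -/
def FixedSubalg (F : Type u) [Field F] (G : Type u) [Group G] (N : Subgroup G)
    (H : Subgroup G) (L : Type u) [CommRing L] [Algebra F L]
    (ρ : H →* (L ≃ₐ[F] L)) : Subalgebra F L where
  carrier := {x | ∀ h : H, (↑h : G) ∈ N → ρ h x = x}
  mul_mem' := by
    intro a b ha hb h hh
    simp only [map_mul, ha h hh, hb h hh]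
  add_mem' := by
    intro a b ha hb h hh
    simp only [map_add, ha h hh, hb h hh]
  one_mem' := by intro h hh; simp
  zero_mem' := by intro h hh; simp
  algebraMap_mem' := by intro r h hh; simp

/-- For `N ⊴ G`, `H ≤ G` and an `H`-Galois algebra `L` over `F`, the
`N`-invariants of the induced algebra satisfy
`Ind_H^G(L)^N ≅ Ind_{H/(N∩H)}^{G/N}(L^{N∩H})` as `G/N`-Galois algebras. -/
theorem invariants_of_induced_algebra
    (F : Type u) [Field F] (G : Type u) [Group G] [Finite G]
    (N : Subgroup G) [N.Normal] (H : Subgroup G)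
    (L : Type u) [CommRing L] [Algebra F L] (ρ : H →* (L ≃ₐ[F] L))
    (ρ' : (H.map (QuotientGroup.mk' N)) →*
      ((FixedSubalg F G N H L ρ) ≃ₐ[F] (FixedSubalg F G N H L ρ)))
    (hρ' : ∀ (h : H) (x : FixedSubalg F G N H L ρ),
      ((ρ' ⟨QuotientGroup.mk' N ↑h, Subgroup.mem_map_of_mem _ h.2⟩ x : FixedSubalg F G N H L ρ) : L) =
        ρ h (x : L)) :
    ∃ Φ : ↥(IndAlg F G H L ρ ⊓ RightInvAlg F G N L) ≃ₐ[F]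
        ↥(IndAlg F (G ⧸ N) (H.map (QuotientGroup.mk' N)) (FixedSubalg F G N H L ρ) ρ'),
      ∀ (f₁ f₂ : (IndAlg F G H L ρ ⊓ RightInvAlg F G N L : Subalgebra F (G → L))) (g : G),
        (∀ x : G, (f₂ : G → L) x = (f₁ : G → L) (x * g)) →
        ∀ q : G ⧸ N,
          (((Φ f₂ : (G ⧸ N) → FixedSubalg F G N H L ρ) q : L)) =
            (((Φ f₁ : (G ⧸ N) → FixedSubalg F G N H L ρ) (q * QuotientGroup.mk g) : L)) := by
  classical
  -- basic facts about membership
  have memInd : ∀ f : ↥(IndAlg F G H L ρ ⊓ RightInvAlg F G N L),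
      ∀ (h : H) (g : G), (f : G → L) (↑h * g) = ρ h ((f : G → L) g) := by
    intro f h g
    exact (Algebra.mem_inf.mp f.2).1 h g
  have memInv : ∀ f : ↥(IndAlg F G H L ρ ⊓ RightInvAlg F G N L),
      ∀ ν ∈ N, ∀ g : G, (f : G → L) (g * ν) = (f : G → L) g := by
    intro f ν hν g
    exact (Algebra.mem_inf.mp f.2).2 ν hν g
  have memFix : ∀ (f : ↥(IndAlg F G H L ρ ⊓ RightInvAlg F G N L)) (g : G),
      (f : G → L) g ∈ FixedSubalg F G N H L ρ := by
    intro f g h hh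
    have h1 : ρ h ((f : G → L) g) = (f : G → L) (↑h * g) := (memInd f h g).symm
    have h2 : (↑h : G) * g = g * (g⁻¹ * ↑h * g) := by group
    have h3 : (g⁻¹ * ↑h * g) ∈ N := Subgroup.Normal.conj_mem' ‹N.Normal› _ hh g
    rw [h1, h2, memInv f _ h3 g]
  -- forward map as raw function
  set mk : G → G ⧸ N := QuotientGroup.mk with hmk
  let toF : ↥(IndAlg F G H L ρ ⊓ RightInvAlg F G N L) →
      ((G ⧸ N) → FixedSubalg F G N H L ρ) := fun f q =>
    Quotient.liftOn' q (fun g => (⟨(f : G → L) g, memFix f g⟩ : FixedSubalg F G N H L ρ))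
      (by
        intro g₁ g₂ hg
        have hg' : g₁⁻¹ * g₂ ∈ N := QuotientGroup.leftRel_apply.mp hg
        apply Subtype.ext
        show (f : G → L) g₁ = (f : G → L) g₂
        have : g₂ = g₁ * (g₁⁻¹ * g₂) := by group
        rw [this, memInv f _ hg' g₁])
  have toF_mk : ∀ (f) (g : G), toF f (mk g) = ⟨(f : G → L) g, memFix f g⟩ := fun _ _ => rfl
  have toF_mem : ∀ f, toF f ∈ IndAlg F (G ⧸ N) (H.map (QuotientGroup.mk' N))
      (FixedSubalg F G N H L ρ) ρ' := by
    intro f h q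
    obtain ⟨h₀, hh₀, hh₀'⟩ := h.2
    induction q using QuotientGroup.induction_on with
    | H g =>
      have hcoe : (↑h : G ⧸ N) * mk g = mk (h₀ * g) := by
        rw [← hh₀']; rfl
      have hh : h = ⟨QuotientGroup.mk' N ↑(⟨h₀, hh₀⟩ : H),
          Subgroup.mem_map_of_mem _ (⟨h₀, hh₀⟩ : H).2⟩ := by
        apply Subtype.ext; exact hh₀'.symm
      rw [hcoe, toF_mk]
      apply Subtype.ext
      rw [hh, hρ' ⟨h₀, hh₀⟩ (toF f (mk g))]
      show (f : G → L) (h₀ * g) = _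
      exact memInd f ⟨h₀, hh₀⟩ g
  -- inverse map
  have invmem : ∀ fbar : ↥(IndAlg F (G ⧸ N) (H.map (QuotientGroup.mk' N))
        (FixedSubalg F G N H L ρ) ρ'),
      (fun g => ((fbar : (G ⧸ N) → FixedSubalg F G N H L ρ) (mk g) : L)) ∈
        IndAlg F G H L ρ ⊓ RightInvAlg F G N L := by
    intro fbar
    refine Algebra.mem_inf.mpr ?_
    constructor
    · intro h g
      have hmm : (mk (↑h * g) : G ⧸ N) = ↑(⟨QuotientGroup.mk' N ↑h,
          Subgroup.mem_map_of_mem _ h.2⟩ : H.map (QuotientGroup.mk' N)) * mk g := rfl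
      show ((fbar : (G ⧸ N) → FixedSubalg F G N H L ρ) (mk (↑h * g)) : L) = _
      rw [hmm, fbar.2 ⟨QuotientGroup.mk' N ↑h, Subgroup.mem_map_of_mem _ h.2⟩ (mk g),
        hρ' h ((fbar : (G ⧸ N) → FixedSubalg F G N H L ρ) (mk g))]
    · intro ν hν g
      have hq : mk (g * ν) = mk g := by
        show mk g * mk ν = mk g
        rw [show (mk ν : G ⧸ N) = 1 from (QuotientGroup.eq_one_iff ν).mpr hν, mul_one]
      show ((fbar : (G ⧸ N) → FixedSubalg F G N H L ρ) (mk (g * ν)) : L) = _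
      rw [hq]
  let Φ : ↥(IndAlg F G H L ρ ⊓ RightInvAlg F G N L) ≃ₐ[F]
      ↥(IndAlg F (G ⧸ N) (H.map (QuotientGroup.mk' N)) (FixedSubalg F G N H L ρ) ρ') :=
    { toFun := fun f => ⟨toF f, toF_mem f⟩
      invFun := fun fbar => ⟨fun g => ((fbar : (G ⧸ N) → FixedSubalg F G N H L ρ) (mk g) : L),
        invmem fbar⟩
      left_inv := by
        intro f
        apply Subtype.ext
        funext g
        rfl
      right_inv := by
        intro fbar
        apply Subtype.ext
        funext q
        induction q using QuotientGroup.induction_on with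
        | H g => exact Subtype.ext rfl
      map_mul' := by
        intro f₁ f₂
        apply Subtype.ext
        funext q
        induction q using QuotientGroup.induction_on with
        | H g => exact Subtype.ext rfl
      map_add' := by
        intro f₁ f₂
        apply Subtype.ext
        funext q
        induction q using QuotientGroup.induction_on with
        | H g => exact Subtype.ext rfl
      commutes' := by
        intro r
        apply Subtype.ext
        funext q
        induction q using QuotientGroup.induction_on with
        | H g => exact Subtype.ext rfl }
  refine ⟨Φ, ?_⟩
  intro f₁ f₂ g hf q
  induction q using QuotientGroup.induction_on with
  | H x =>
    show ((f₂ : G → L) x) = _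
    rw [hf x]
    rfl
end
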